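/- arXiv:2208.07274 — 3 statements merged into one kernel-verified Lean document; each statement's English description precedes it below -/
import Mathlib

section
/- Let X and Y be independent nonnegative real random variables such that X has the Fisher-Snedecor F density with parameters (m₁, m_{s1}, Ω₁) and Y has the Fisher-Snedecor F density with parameters (m₂, m_{s2}, Ω₂), where m₁, m₂ > 0, m_{s1}, m_{s2} > 1 and Ω₁, Ω₂ > 0. Then the expectation of W = √X · √Y equals E[W] = [B(m₁+1/2, m_{s1}−1/2) · B(m₂+1/2, m_{s2}−1/2) / (B(m₁, m_{s1}) · B(m₂, m_{s2}))] · (m₁·m₂ / ((m_{s1}−1)(m_{s2}−1)·Ω₁·Ω₂))^{−1/2}. (Mean of the per-element cascaded channel amplitude W_n, Appendix A.) -/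
open MeasureTheory ProbabilityTheory Real Set

/-- Euler Beta function B(p,q) = Γ(p)Γ(q)/Γ(p+q). -/
noncomputable def eulerBeta (p q : ℝ) : ℝ := Real.Gamma p * Real.Gamma q / Real.Gamma (p + q)

/-- The Fisher-Snedecor F density with fading parameter m, shadowing parameter m_s
and mean power Ω. -/
noncomputable def fisherF (m ms Ω x : ℝ) : ℝ :=
  m ^ m * ((ms - 1) * Ω) ^ ms * x ^ (m - 1) /
    (eulerBeta m ms * (m * x + (ms - 1) * Ω) ^ (m + ms))

/-
By independence, E[√X √Y] = E[√X] E[√Y], so it suffices to compute the half-moment of one F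
variable. The substitution x = t/(1-t) turns Euler's integral ∫₀¹ t^(p-1) (1-t)^(q-1) dt = B(p,q)
into ∫₀^∞ x^(p-1) (1+x)^(-(p+q)) dx = B(p,q); rescaling x and reading off p = m + s, q = m_s - s
gives E[X^s] = B(m+s, m_s-s) / B(m, m_s) · ((m_s-1) Ω / m)^s for -m < s < m_s, here with s = 1/2.
-/
lemma eulerBeta_eq_beta : eulerBeta = beta := rfl

lemma eulerBeta_pos {p q : ℝ} (hp : 0 < p) (hq : 0 < q) : 0 < eulerBeta p q :=
  eulerBeta_eq_beta ▸ beta_pos hp hq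

lemma intervalIntegral_rpow_mul_one_sub_rpow {p q : ℝ} (hp : 0 < p) (hq : 0 < q) :
    ∫ t in (0:ℝ)..1, t ^ (p - 1) * (1 - t) ^ (q - 1) = eulerBeta p q := by
  have hcast : Complex.betaIntegral p q
      = ↑(∫ t in (0:ℝ)..1, t ^ (p - 1) * (1 - t) ^ (q - 1)) := by
    rw [Complex.betaIntegral, ← intervalIntegral.integral_ofReal]
    refine intervalIntegral.integral_congr fun t ht => ?_
    rw [uIcc_of_le zero_le_one] at ht
    push_cast
    rw [Complex.ofReal_cpow ht.1, Complex.ofReal_cpow (sub_nonneg.2 ht.2)]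
    push_cast
    rfl
  rw [eulerBeta_eq_beta, beta_eq_betaIntegralReal p q hp hq, hcast, Complex.ofReal_re]

lemma image_div_one_sub_Ioo : (fun t : ℝ => t / (1 - t)) '' Ioo 0 1 = Ioi 0 := by
  ext x
  constructor
  · rintro ⟨t, ⟨ht0, ht1⟩, rfl⟩
    exact div_pos ht0 (sub_pos.2 ht1)
  · intro (hx : 0 < x)
    refine ⟨x / (1 + x), ⟨by positivity, (div_lt_one (by positivity)).2 (by linarith)⟩, ?_⟩
    field_simp
    ring

lemma injOn_div_one_sub_Ioo : InjOn (fun t : ℝ => t / (1 - t)) (Ioo 0 1) := by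
  rintro a ⟨-, ha1⟩ b ⟨-, hb1⟩ h
  have ha : 1 - a ≠ 0 := (sub_pos.2 ha1).ne'
  have hb : 1 - b ≠ 0 := (sub_pos.2 hb1).ne'
  field_simp at h
  linarith

lemma hasDerivAt_div_one_sub {t : ℝ} (ht : t ≠ 1) :
    HasDerivAt (fun t : ℝ => t / (1 - t)) ((1 - t) ^ 2)⁻¹ t := by
  have h1 : 1 - t ≠ 0 := sub_ne_zero.2 (Ne.symm ht)
  exact ((hasDerivAt_id' t).fun_div ((hasDerivAt_id' t).const_sub 1) h1).congr_deriv
    (by field_simp; ring)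

lemma integral_Ioi_rpow_mul_one_add_rpow {p q : ℝ} (hp : 0 < p) (hq : 0 < q) :
    ∫ x in Ioi (0:ℝ), x ^ (p - 1) * (1 + x) ^ (-(p + q)) = eulerBeta p q := by
  rw [← image_div_one_sub_Ioo, integral_image_eq_integral_abs_deriv_smul measurableSet_Ioo
      (fun t ht => (hasDerivAt_div_one_sub ht.2.ne).hasDerivWithinAt) injOn_div_one_sub_Ioo,
    ← intervalIntegral_rpow_mul_one_sub_rpow hp hq, intervalIntegral.integral_of_le zero_le_one,
    integral_Ioc_eq_integral_Ioo]
  refine setIntegral_congr_fun measurableSet_Ioo fun t ⟨ht0, ht1⟩ => ?_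
  have h1 : 0 < 1 - t := sub_pos.2 ht1
  have hsum : 1 + t / (1 - t) = (1 - t)⁻¹ := by field_simp; ring
  have hpow : ((1 - t) ^ 2)⁻¹ * ((1 - t) ^ (p - 1))⁻¹ * ((1 - t)⁻¹) ^ (-(p + q))
      = (1 - t) ^ (q - 1) := by
    rw [Real.inv_rpow h1.le, Real.rpow_neg h1.le, inv_inv, ← Real.rpow_natCast,
      ← Real.rpow_neg h1.le, ← Real.rpow_neg h1.le, ← Real.rpow_add h1, ← Real.rpow_add h1]
    congr 1
    push_cast
    ring
  rw [smul_eq_mul, hsum, abs_of_pos (by positivity), Real.div_rpow ht0.le h1.le, ← hpow]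
  field_simp

lemma integral_Ioi_rpow_mul_add_rpow {p q a c : ℝ} (hp : 0 < p) (hq : 0 < q) (ha : 0 < a)
    (hc : 0 < c) :
    ∫ x in Ioi (0:ℝ), x ^ (p - 1) * (a * x + c) ^ (-(p + q))
      = eulerBeta p q * a ^ (-p) * c ^ (-q) := by
  have hac : 0 < a / c := div_pos ha hc
  have hscale : ∀ x ∈ Ioi (0:ℝ), x ^ (p - 1) * (a * x + c) ^ (-(p + q))
      = (((a / c) ^ (p - 1))⁻¹ * (c ^ (p + q))⁻¹) •
        (fun y : ℝ => y ^ (p - 1) * (1 + y) ^ (-(p + q))) ((a / c) * x) := by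
    intro x (hx : 0 < x)
    have hsum : 1 + (a / c) * x = (a * x + c) / c := by field_simp; ring
    dsimp only
    rw [smul_eq_mul, hsum, Real.mul_rpow hac.le hx.le,
      Real.div_rpow (by positivity : 0 ≤ a * x + c) hc.le, Real.rpow_neg hc.le]
    have : (a / c) ^ (p - 1) ≠ 0 := by positivity
    field_simp
  rw [setIntegral_congr_fun measurableSet_Ioi hscale, integral_smul,
    integral_comp_mul_left_Ioi (fun y : ℝ => y ^ (p - 1) * (1 + y) ^ (-(p + q))) 0 hac,
    mul_zero, integral_Ioi_rpow_mul_one_add_rpow hp hq, smul_eq_mul, smul_eq_mul,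
    Real.div_rpow ha.le hc.le, Real.rpow_neg ha.le, Real.rpow_neg hc.le, Real.rpow_add hc,
    Real.rpow_sub_one ha.ne', Real.rpow_sub_one hc.ne']
  have : 0 < a ^ p := by positivity
  have : 0 < c ^ p := by positivity
  have : 0 < c ^ q := by positivity
  field_simp

lemma integral_Ioi_rpow_mul_fisherF {m ms Ω s : ℝ} (hm : 0 < m) (hms : 1 < ms) (hΩ : 0 < Ω)
    (hsm : -m < s) (hsms : s < ms) :
    ∫ x in Ioi (0:ℝ), x ^ s * fisherF m ms Ω x
      = eulerBeta (m + s) (ms - s) / eulerBeta m ms * ((ms - 1) * Ω / m) ^ s := by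
  set c := (ms - 1) * Ω with hc_def
  have hc : 0 < c := mul_pos (sub_pos.2 hms) hΩ
  have hB := eulerBeta_pos hm (by linarith : 0 < ms)
  have hintegrand : ∀ x ∈ Ioi (0:ℝ), x ^ s * fisherF m ms Ω x
      = m ^ m * c ^ ms / eulerBeta m ms *
        (x ^ ((m + s) - 1) * (m * x + c) ^ (-((m + s) + (ms - s)))) := by
    intro x (hx : 0 < x)
    rw [fisherF, ← hc_def, show (m + s) - 1 = s + (m - 1) by ring, Real.rpow_add hx,
      show -((m + s) + (ms - s)) = -(m + ms) by ring, Real.rpow_neg (by positivity)]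
    have : (m * x + c) ^ (m + ms) ≠ 0 := by positivity
    field_simp
  rw [setIntegral_congr_fun measurableSet_Ioi hintegrand, integral_const_mul,
    integral_Ioi_rpow_mul_add_rpow (by linarith) (by linarith) hm hc, Real.div_rpow hc.le hm.le,
    Real.rpow_neg hm.le, Real.rpow_add hm, Real.rpow_neg hc.le, Real.rpow_sub hc]
  have : 0 < m ^ m := by positivity
  have : 0 < m ^ s := by positivity
  have : 0 < c ^ ms := by positivity
  have : 0 < c ^ s := by positivity
  field_simp

lemma measurable_fisherF (m ms Ω : ℝ) : Measurable (fisherF m ms Ω) := by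
  unfold fisherF
  fun_prop

lemma fisherF_pos {m ms Ω x : ℝ} (hm : 0 < m) (hms : 1 < ms) (hΩ : 0 < Ω) (hx : 0 < x) :
    0 < fisherF m ms Ω x := by
  have := eulerBeta_pos hm (by linarith : 0 < ms)
  have := sub_pos.2 hms
  unfold fisherF
  positivity

noncomputable def fisherFMeasure (m ms Ω : ℝ) : Measure ℝ :=
  (volume.restrict (Ioi 0)).withDensity fun x => ENNReal.ofReal (fisherF m ms Ω x)

section FisherFMeasure

variable {m ms Ω : ℝ}

lemma fisherFMeasure_ne_zero (hm : 0 < m) (hms : 1 < ms) (hΩ : 0 < Ω) :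
    fisherFMeasure m ms Ω ≠ 0 := by
  rw [fisherFMeasure, Ne,
    withDensity_eq_zero_iff (measurable_fisherF m ms Ω).ennreal_ofReal.aemeasurable]
  intro h
  have hfalse : ∀ᵐ x ∂(volume.restrict (Ioi (0:ℝ))), False := by
    filter_upwards [h, ae_restrict_mem measurableSet_Ioi] with x hx (hx0 : 0 < x)
    exact (ENNReal.ofReal_pos.2 (fisherF_pos hm hms hΩ hx0)).ne' hx
  rw [Filter.eventually_false_iff_eq_bot, ae_eq_bot, Measure.restrict_eq_zero,
    Real.volume_Ioi] at hfalse
  exact ENNReal.top_ne_zero hfalse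

lemma integral_fisherFMeasure (hm : 0 < m) (hms : 1 < ms) (hΩ : 0 < Ω) (g : ℝ → ℝ) :
    ∫ x, g x ∂fisherFMeasure m ms Ω = ∫ x in Ioi 0, fisherF m ms Ω x * g x := by
  rw [fisherFMeasure, integral_withDensity_eq_integral_toReal_smul
    (measurable_fisherF m ms Ω).ennreal_ofReal (ae_of_all _ fun _ => ENNReal.ofReal_lt_top)]
  refine setIntegral_congr_fun measurableSet_Ioi fun x (hx : 0 < x) => ?_
  rw [ENNReal.toReal_ofReal (fisherF_pos hm hms hΩ hx).le, smul_eq_mul]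

variable {α : Type*} {mα : MeasurableSpace α} {P : Measure α} {X : α → ℝ}

lemma aemeasurable_of_map_eq_fisherFMeasure (hm : 0 < m) (hms : 1 < ms) (hΩ : 0 < Ω)
    (hX : Measure.map X P = fisherFMeasure m ms Ω) : AEMeasurable X P :=
  AEMeasurable.of_map_ne_zero (hX ▸ fisherFMeasure_ne_zero hm hms hΩ)

lemma integral_sqrt_of_map_eq_fisherFMeasure (hm : 0 < m) (hms : 1 < ms) (hΩ : 0 < Ω)
    (hX : Measure.map X P = fisherFMeasure m ms Ω) :
    ∫ ω, √(X ω) ∂P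
      = eulerBeta (m + 1/2) (ms - 1/2) / eulerBeta m ms * ((ms - 1) * Ω / m) ^ (1/2 : ℝ) := by
  rw [← integral_map (aemeasurable_of_map_eq_fisherFMeasure hm hms hΩ hX)
      Real.continuous_sqrt.aestronglyMeasurable, hX, integral_fisherFMeasure hm hms hΩ,
    ← integral_Ioi_rpow_mul_fisherF hm hms hΩ (by linarith) (by linarith)]
  refine setIntegral_congr_fun measurableSet_Ioi fun x _ => ?_
  rw [Real.sqrt_eq_rpow, mul_comm]

end FisherFMeasure

theorem stmt4_general {α : Type*} {mα : MeasurableSpace α} (P : Measure α)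
    (X Y : α → ℝ) (hXY : IndepFun X Y P)
    (m₁ m₂ ms₁ ms₂ Ω₁ Ω₂ : ℝ)
    (hm₁ : 0 < m₁) (hm₂ : 0 < m₂) (hms₁ : 1 < ms₁) (hms₂ : 1 < ms₂)
    (hΩ₁ : 0 < Ω₁) (hΩ₂ : 0 < Ω₂)
    (hX : Measure.map X P
      = (volume.restrict (Ioi (0:ℝ))).withDensity
          (fun x => ENNReal.ofReal (fisherF m₁ ms₁ Ω₁ x)))
    (hY : Measure.map Y P
      = (volume.restrict (Ioi (0:ℝ))).withDensity
          (fun y => ENNReal.ofReal (fisherF m₂ ms₂ Ω₂ y))) :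
    ∫ ω, Real.sqrt (X ω) * Real.sqrt (Y ω) ∂P
      = (eulerBeta (m₁ + 1/2) (ms₁ - 1/2) * eulerBeta (m₂ + 1/2) (ms₂ - 1/2) /
          (eulerBeta m₁ ms₁ * eulerBeta m₂ ms₂)) *
        (m₁ * m₂ / ((ms₁ - 1) * (ms₂ - 1) * Ω₁ * Ω₂)) ^ (-(1:ℝ)/2) := by
  have hXm := aemeasurable_of_map_eq_fisherFMeasure hm₁ hms₁ hΩ₁ hX
  have hYm := aemeasurable_of_map_eq_fisherFMeasure hm₂ hms₂ hΩ₂ hY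
  have hsqrt : IndepFun (fun ω => √(X ω)) (fun ω => √(Y ω)) P :=
    hXY.comp Real.continuous_sqrt.measurable Real.continuous_sqrt.measurable
  rw [hsqrt.integral_fun_mul_eq_mul_integral hXm.sqrt.aestronglyMeasurable
      hYm.sqrt.aestronglyMeasurable,
    integral_sqrt_of_map_eq_fisherFMeasure hm₁ hms₁ hΩ₁ hX,
    integral_sqrt_of_map_eq_fisherFMeasure hm₂ hms₂ hΩ₂ hY]
  have hc₁ : 0 < (ms₁ - 1) * Ω₁ / m₁ := div_pos (mul_pos (sub_pos.2 hms₁) hΩ₁) hm₁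
  have hc₂ : 0 < (ms₂ - 1) * Ω₂ / m₂ := div_pos (mul_pos (sub_pos.2 hms₂) hΩ₂) hm₂
  have hscale : (m₁ * m₂ / ((ms₁ - 1) * (ms₂ - 1) * Ω₁ * Ω₂)) ^ (-(1:ℝ)/2)
      = ((ms₁ - 1) * Ω₁ / m₁) ^ (1/2 : ℝ) * ((ms₂ - 1) * Ω₂ / m₂) ^ (1/2 : ℝ) := by
    rw [← Real.mul_rpow hc₁.le hc₂.le, neg_div, Real.rpow_neg (by positivity),
      ← Real.inv_rpow (by positivity)]
    congr 1
    field_simp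
  rw [hscale]
  ring

/-- mean of the per-element cascaded channel amplitude W = √X·√Y with
independent Fisher-Snedecor F distributed X and Y. -/
theorem stmt4 {α : Type*} {mα : MeasurableSpace α} (P : Measure α) [IsProbabilityMeasure P]
    (X Y : α → ℝ) (hXY : IndepFun X Y P)
    (hX0 : ∀ᵐ ω ∂P, 0 ≤ X ω) (hY0 : ∀ᵐ ω ∂P, 0 ≤ Y ω)
    (m₁ m₂ ms₁ ms₂ Ω₁ Ω₂ : ℝ)
    (hm₁ : 0 < m₁) (hm₂ : 0 < m₂) (hms₁ : 1 < ms₁) (hms₂ : 1 < ms₂)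
    (hΩ₁ : 0 < Ω₁) (hΩ₂ : 0 < Ω₂)
    (hX : Measure.map X P
      = (volume.restrict (Ioi (0:ℝ))).withDensity
          (fun x => ENNReal.ofReal (fisherF m₁ ms₁ Ω₁ x)))
    (hY : Measure.map Y P
      = (volume.restrict (Ioi (0:ℝ))).withDensity
          (fun y => ENNReal.ofReal (fisherF m₂ ms₂ Ω₂ y))) :
    ∫ ω, Real.sqrt (X ω) * Real.sqrt (Y ω) ∂P
      = (eulerBeta (m₁ + 1/2) (ms₁ - 1/2) * eulerBeta (m₂ + 1/2) (ms₂ - 1/2) /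
          (eulerBeta m₁ ms₁ * eulerBeta m₂ ms₂)) *
        (m₁ * m₂ / ((ms₁ - 1) * (ms₂ - 1) * Ω₁ * Ω₂)) ^ (-(1:ℝ)/2) :=
  stmt4_general (mα := mα) P X Y hXY m₁ m₂ ms₁ ms₂ Ω₁ Ω₂ hm₁ hm₂ hms₁ hms₂ hΩ₁ hΩ₂ hX hY
end

section
/- Let a > -1, a' > -1, b > 0, b' > 0, γ̄_E > 0 and R_t > 1 be real numbers, and set R̄_t = R_t − 1. Let f_E be the SNR density with parameters (a', b', γ̄_E), and for γ̄_B > 0 define the secrecy outage probability P_sop(γ̄_B) = ∫₀^∞ [ γ(a+1, √(y·R_t + R̄_t)/(b·√γ̄_B)) / Γ(a+1) ] · f_E(y) dy. Then the integral C = (1/Γ(a+2)) · ∫₀^∞ (y·R_t + R̄_t)^{(a+1)/2} · f_E(y) dy is finite, and (b²·γ̄_B)^{(a+1)/2} · P_sop(γ̄_B) → C as γ̄_B → ∞. In particular, the SOP decays like γ̄_B^{−(a+1)/2} in the high-SNR regime. (Precise form of the asymptotic SOP, Proposition 1.) -/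
open MeasureTheory Real Set Filter

/-- The lower incomplete gamma function γ(s, x) = ∫₀^x t^{s-1} e^{-t} dt. -/
noncomputable def lowerGamma (s x : ℝ) : ℝ := ∫ t in (0:ℝ)..x, t ^ (s - 1) * Real.exp (-t)

/-- The SNR density with parameters (a, b, γ̄). -/
noncomputable def snrDensity (a b γbar γ : ℝ) : ℝ :=
  γ ^ ((a - 1) / 2) * Real.exp (-(Real.sqrt γ / (b * Real.sqrt γbar))) /
    (2 * γbar ^ ((a + 1) / 2) * b ^ (a + 1) * Real.Gamma (a + 1))

/-! For `x ≥ 0` and `s > 0`, bounding `e^{-t}` on `[0, x]` by `1` and by `e^{-x}` gives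
`e^{-x} x^s / s ≤ γ(s, x) ≤ x^s / s`. With `c = b √γ̄_B` and `s = a + 1` one has
`(b² γ̄_B)^{s/2} = c^s` and `c^s (√γ_t / c)^s = γ_t^{s/2}`, so `(b² γ̄_B)^{s/2} γ(s, √γ_t / c)` is
squeezed between `e^{-√γ_t / c} γ_t^{s/2} / s` and `γ_t^{s/2} / s`: it tends to `γ_t^{s/2} / s`
and is dominated by that limit. Dominated convergence against `f_E` then gives the claim, with
`Γ(a + 2) = (a + 1) Γ(a + 1)`. The dominating function is integrable because
`γ_t^{s/2} ≤ (2 R_t - 1)^{s/2} (1 + y^{s/2})`, and the substitution `y = x²` turns the moments of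
`f_E` into integrals of the Gamma type `x^r e^{-x / c}`. -/

section LowerGamma

variable {s : ℝ}

lemma intervalIntegrable_rpow_mul_exp_neg (hs : 0 < s) (x y : ℝ) :
    IntervalIntegrable (fun t : ℝ => t ^ (s - 1) * exp (-t)) volume x y :=
  (intervalIntegral.intervalIntegrable_rpow' (by linarith)).mul_continuousOn
    (by fun_prop)

lemma continuous_lowerGamma (hs : 0 < s) : Continuous (lowerGamma s) :=
  intervalIntegral.continuous_primitive (intervalIntegrable_rpow_mul_exp_neg hs) 0

lemma lowerGamma_nonneg {x : ℝ} (hx : 0 ≤ x) : 0 ≤ lowerGamma s x :=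
  intervalIntegral.integral_nonneg hx fun _ ht =>
    mul_nonneg (rpow_nonneg ht.1 _) (exp_pos _).le

lemma integral_rpow_sub_one (hs : 0 < s) (x : ℝ) : ∫ t in (0:ℝ)..x, t ^ (s - 1) = x ^ s / s := by
  rw [integral_rpow (Or.inl (by linarith)), sub_add_cancel, zero_rpow hs.ne', sub_zero]

lemma lowerGamma_le (hs : 0 < s) {x : ℝ} (hx : 0 ≤ x) : lowerGamma s x ≤ x ^ s / s := by
  rw [← integral_rpow_sub_one hs]
  refine intervalIntegral.integral_mono_on hx (intervalIntegrable_rpow_mul_exp_neg hs 0 x)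
    (intervalIntegral.intervalIntegrable_rpow' (by linarith)) fun t ht => ?_
  exact mul_le_of_le_one_right (rpow_nonneg ht.1 _) (exp_le_one_iff.mpr (by linarith [ht.1]))

lemma exp_neg_mul_le_lowerGamma (hs : 0 < s) {x : ℝ} (hx : 0 ≤ x) :
    exp (-x) * (x ^ s / s) ≤ lowerGamma s x := by
  rw [← integral_rpow_sub_one hs, ← intervalIntegral.integral_const_mul]
  refine intervalIntegral.integral_mono_on hx
    ((intervalIntegral.intervalIntegrable_rpow' (by linarith)).const_mul _)
    (intervalIntegrable_rpow_mul_exp_neg hs 0 x) fun t ht => ?_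
  rw [mul_comm]
  exact mul_le_mul_of_nonneg_left (exp_le_exp.mpr (neg_le_neg ht.2)) (rpow_nonneg ht.1 _)

lemma rpow_mul_rpow_sqrt_div {z c : ℝ} (hz : 0 ≤ z) (hc : 0 < c) :
    c ^ s * (√z / c) ^ s = z ^ (s / 2) := by
  rw [← mul_rpow hc.le (by positivity), mul_div_cancel₀ _ hc.ne', sqrt_eq_rpow,
    ← rpow_mul hz, one_div_mul_eq_div]

lemma rpow_mul_lowerGamma_sqrt_div_le (hs : 0 < s) {z c : ℝ} (hz : 0 ≤ z) (hc : 0 < c) :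
    c ^ s * lowerGamma s (√z / c) ≤ z ^ (s / 2) / s := by
  calc c ^ s * lowerGamma s (√z / c) ≤ c ^ s * ((√z / c) ^ s / s) := by
        gcongr; exact lowerGamma_le hs (by positivity)
    _ = z ^ (s / 2) / s := by rw [← rpow_mul_rpow_sqrt_div hz hc, mul_div_assoc]

lemma tendsto_rpow_mul_lowerGamma_sqrt_div (hs : 0 < s) {z : ℝ} (hz : 0 ≤ z) :
    Tendsto (fun c => c ^ s * lowerGamma s (√z / c)) atTop (nhds (z ^ (s / 2) / s)) := by
  have hlower : Tendsto (fun c => exp (-(√z / c)) * (z ^ (s / 2) / s)) atTop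
      (nhds (z ^ (s / 2) / s)) := by
    have h := ((tendsto_const_nhds (x := √z).div_atTop tendsto_id).neg.rexp).mul_const
      (z ^ (s / 2) / s)
    simpa only [neg_zero, exp_zero, one_mul, id] using h
  refine tendsto_of_tendsto_of_tendsto_of_le_of_le' hlower tendsto_const_nhds ?_ ?_
  · filter_upwards [eventually_gt_atTop 0] with c hc
    calc exp (-(√z / c)) * (z ^ (s / 2) / s)
        = c ^ s * (exp (-(√z / c)) * ((√z / c) ^ s / s)) := by
          rw [← rpow_mul_rpow_sqrt_div hz hc]; ring
      _ ≤ c ^ s * lowerGamma s (√z / c) := by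
          gcongr; exact exp_neg_mul_le_lowerGamma hs (by positivity)
  · filter_upwards [eventually_gt_atTop 0] with c hc
    exact rpow_mul_lowerGamma_sqrt_div_le hs hz hc

end LowerGamma

lemma sq_mul_rpow_half {b u : ℝ} (s : ℝ) (hb : 0 ≤ b) (hu : 0 ≤ u) :
    (b ^ 2 * u) ^ (s / 2) = (b * √u) ^ s := by
  rw [show b ^ 2 * u = (b * √u) ^ 2 by rw [mul_pow, sq_sqrt hu], ← rpow_natCast,
    ← rpow_mul (by positivity)]
  congr 1
  ring

theorem tendsto_rpow_mul_integral_lowerGamma {α : Type*} [MeasurableSpace α] {μ : Measure α}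
    {s b : ℝ} {γt w : α → ℝ} (hs : 0 < s) (hb : 0 < b) (hγ : AEMeasurable γt μ)
    (hγ0 : ∀ᵐ y ∂μ, 0 ≤ γt y) (hw : AEStronglyMeasurable w μ)
    (hint : Integrable (fun y => γt y ^ (s / 2) * w y) μ) :
    Tendsto (fun u => (b ^ 2 * u) ^ (s / 2) *
        ∫ y, lowerGamma s (√(γt y) / (b * √u)) / Gamma s * w y ∂μ)
      atTop (nhds (1 / Gamma (s + 1) * ∫ y, γt y ^ (s / 2) * w y ∂μ)) := by
  set F := fun u y =>
    (b ^ 2 * u) ^ (s / 2) * (lowerGamma s (√(γt y) / (b * √u)) / Gamma s * w y)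
  have hΓ : 0 < Gamma s := Gamma_pos_of_pos hs
  have hΓ_succ : Gamma (s + 1) = s * Gamma s := Gamma_add_one hs.ne'
  have hF : ∀ u > 0, ∀ y,
      F u y = (b * √u) ^ s * lowerGamma s (√(γt y) / (b * √u)) * (w y / Gamma s) := by
    intro u hu y
    simp only [F]
    rw [sq_mul_rpow_half s hb.le hu.le]
    ring
  have hmeas : ∀ u, AEStronglyMeasurable (F u) μ := fun u =>
    aestronglyMeasurable_const.mul
      ((((continuous_lowerGamma hs).measurable.comp_aemeasurable
        (hγ.sqrt.div_const _)).div_const _).aestronglyMeasurable.mul hw)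
  have hbound : ∀ᶠ u in atTop, ∀ᵐ y ∂μ,
      ‖F u y‖ ≤ 1 / Gamma (s + 1) * ‖γt y ^ (s / 2) * w y‖ := by
    filter_upwards [eventually_gt_atTop 0] with u hu
    filter_upwards [hγ0] with y hy
    have hc : 0 < b * √u := by positivity
    have hG : 0 ≤ (b * √u) ^ s * lowerGamma s (√(γt y) / (b * √u)) :=
      mul_nonneg (rpow_nonneg hc.le _) (lowerGamma_nonneg (by positivity))
    rw [hF u hu y, norm_mul, norm_of_nonneg hG, norm_div, norm_of_nonneg hΓ.le, norm_mul,
      norm_of_nonneg (rpow_nonneg hy _), hΓ_succ]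
    calc (b * √u) ^ s * lowerGamma s (√(γt y) / (b * √u)) * (‖w y‖ / Gamma s)
        ≤ γt y ^ (s / 2) / s * (‖w y‖ / Gamma s) := by
          gcongr; exact rpow_mul_lowerGamma_sqrt_div_le hs hy hc
      _ = 1 / (s * Gamma s) * (γt y ^ (s / 2) * ‖w y‖) := by field_simp
  have hpointwise : ∀ᵐ y ∂μ,
      Tendsto (fun u => F u y) atTop (nhds (1 / Gamma (s + 1) * (γt y ^ (s / 2) * w y))) := by
    filter_upwards [hγ0] with y hy
    have h := ((tendsto_rpow_mul_lowerGamma_sqrt_div hs hy).comp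
      (tendsto_sqrt_atTop.const_mul_atTop hb)).mul_const (w y / Gamma s)
    rw [show γt y ^ (s / 2) / s * (w y / Gamma s)
        = 1 / Gamma (s + 1) * (γt y ^ (s / 2) * w y) by rw [hΓ_succ]; field_simp] at h
    refine h.congr' ?_
    filter_upwards [eventually_gt_atTop 0] with u hu
    exact (hF u hu y).symm
  have hlim := tendsto_integral_filter_of_dominated_convergence _
    (Eventually.of_forall hmeas) hbound (hint.norm.const_mul _) hpointwise
  rw [integral_const_mul] at hlim
  exact hlim.congr fun u => integral_const_mul _ _

lemma integrableOn_rpow_mul_exp_neg_sqrt_div {r c : ℝ} (hr : -1 < r) (hc : 0 < c) :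
    IntegrableOn (fun y : ℝ => y ^ r * exp (-(√y / c))) (Ioi 0) := by
  rw [← integrableOn_Ioi_comp_rpow_iff' _ two_ne_zero]
  have h := integrableOn_rpow_mul_exp_neg_mul_rpow (s := 2 * r + 1) (p := 1) (b := 1 / c)
    (by linarith) one_pos (by positivity)
  refine h.congr_fun (fun x (hx : 0 < x) => ?_) measurableSet_Ioi
  have hsqrt : √(x ^ (2 : ℝ)) = x := by rw [rpow_two, sqrt_sq hx.le]
  simp only [smul_eq_mul, hsqrt, ← rpow_mul hx.le, rpow_add hx]
  norm_num
  rw [inv_mul_eq_div]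
  ring

lemma snrDensity_nonneg {a b γbar y : ℝ} (ha : -1 < a) (hb : 0 ≤ b) (hγ : 0 ≤ γbar)
    (hy : 0 ≤ y) : 0 ≤ snrDensity a b γbar y := by
  have := Gamma_pos_of_pos (show 0 < a + 1 by linarith)
  unfold snrDensity
  positivity

@[fun_prop]
lemma measurable_snrDensity (a b γbar : ℝ) : Measurable (snrDensity a b γbar) := by
  unfold snrDensity
  fun_prop

lemma integrableOn_rpow_mul_snrDensity {a b γbar p : ℝ} (hp : -(a + 1) / 2 < p) (hb : 0 < b)
    (hγ : 0 < γbar) : IntegrableOn (fun y => y ^ p * snrDensity a b γbar y) (Ioi 0) := by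
  have hc : 0 < b * √γbar := by positivity
  refine IntegrableOn.congr_fun ((integrableOn_rpow_mul_exp_neg_sqrt_div
    (r := p + (a - 1) / 2) (by linarith) hc).div_const
      (2 * γbar ^ ((a + 1) / 2) * b ^ (a + 1) * Gamma (a + 1)))
    (fun y (hy : 0 < y) => ?_) measurableSet_Ioi
  rw [snrDensity, rpow_add hy]
  ring

lemma mul_add_rpow_le {x c d q : ℝ} (hx : 0 ≤ x) (hc : 0 ≤ c) (hd : 0 ≤ d) (hq : 0 ≤ q) :
    (x * c + d) ^ q ≤ (c + d) ^ q * (1 + x ^ q) := by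
  rcases le_total x 1 with h | h
  · calc (x * c + d) ^ q ≤ (c + d) ^ q := by gcongr; nlinarith
      _ ≤ (c + d) ^ q * (1 + x ^ q) :=
        le_mul_of_one_le_right (by positivity) (by linarith [rpow_nonneg hx q])
  · calc (x * c + d) ^ q ≤ ((c + d) * x) ^ q := by gcongr; nlinarith
      _ = (c + d) ^ q * x ^ q := mul_rpow (by positivity) hx
      _ ≤ (c + d) ^ q * (1 + x ^ q) := by gcongr; linarith

lemma integrableOn_mul_add_rpow_mul_snrDensity {a b γbar c d q : ℝ} (ha : -1 < a) (hb : 0 < b)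
    (hγ : 0 < γbar) (hc : 0 ≤ c) (hd : 0 ≤ d) (hq : 0 ≤ q) :
    IntegrableOn (fun y => (y * c + d) ^ q * snrDensity a b γbar y) (Ioi 0) := by
  have hmoment (p : ℝ) (hp : 0 ≤ p) := integrableOn_rpow_mul_snrDensity (a := a) (p := p)
    (by linarith) hb hγ
  refine (((hmoment 0 le_rfl).add (hmoment q hq)).const_mul ((c + d) ^ q)).mono'
    (by fun_prop) ?_
  filter_upwards [self_mem_ae_restrict measurableSet_Ioi] with y (hy : 0 < y)
  have hf := snrDensity_nonneg ha hb.le hγ.le hy.le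
  simp only [Pi.add_apply, rpow_zero, one_mul]
  rw [norm_of_nonneg (by positivity), ← one_add_mul, ← mul_assoc]
  exact mul_le_mul_of_nonneg_right (mul_add_rpow_le hy.le hc hd hq) hf

/-- Proposition 1, precise form: the SOP decays like
γ̄_B^{−(a+1)/2}: (b²γ̄_B)^{(a+1)/2} · P_sop(γ̄_B) → C as γ̄_B → ∞, where
C = (1/Γ(a+2)) ∫₀^∞ (y R_t + R̄_t)^{(a+1)/2} f_E(y) dy is finite. -/
theorem stmt10 (a a' b b' γbarE Rt : ℝ)
    (ha : -1 < a) (ha' : -1 < a') (hb : 0 < b) (hb' : 0 < b')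
    (hγE : 0 < γbarE) (hRt : 1 < Rt) :
    IntegrableOn
      (fun y => (y * Rt + (Rt - 1)) ^ ((a + 1) / 2) * snrDensity a' b' γbarE y)
      (Ioi (0:ℝ)) ∧
    Tendsto
      (fun γbarB : ℝ =>
        (b ^ 2 * γbarB) ^ ((a + 1) / 2) *
          ∫ y in Ioi (0:ℝ),
            (lowerGamma (a + 1) (Real.sqrt (y * Rt + (Rt - 1)) / (b * Real.sqrt γbarB)) /
              Real.Gamma (a + 1)) * snrDensity a' b' γbarE y)
      atTop
      (nhds ((1 / Real.Gamma (a + 2)) *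
        ∫ y in Ioi (0:ℝ),
          (y * Rt + (Rt - 1)) ^ ((a + 1) / 2) * snrDensity a' b' γbarE y)) := by
  have hint := integrableOn_mul_add_rpow_mul_snrDensity (c := Rt) (d := Rt - 1)
    (q := (a + 1) / 2) ha' hb' hγE (by linarith) (by linarith) (by linarith)
  refine ⟨hint, ?_⟩
  have hγt : ∀ᵐ y ∂volume.restrict (Ioi (0:ℝ)), 0 ≤ y * Rt + (Rt - 1) :=
    ae_restrict_of_forall_mem measurableSet_Ioi fun y (hy : 0 < y) => by nlinarith
  rw [show a + 2 = a + 1 + 1 by ring]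
  exact tendsto_rpow_mul_integral_lowerGamma (by linarith) hb (by fun_prop) hγt (by fun_prop) hint
end

section
/- Let a > -1 and a' > -1 be real numbers, and define the complex function χ'(s) = Γ(2s + a' − 1) · Γ(a + 3 − 2s) · Γ(2s − 2) / Γ(2s − 1). Then lim_{s → (a+3)/2} ( s − (a+3)/2 ) · χ'(s) = − Γ(a + a' + 2) · Γ(a + 1) / ( 2 · Γ(a + 2) ). (Residue of the SOP Mellin–Barnes integrand at its dominant right pole s = (a+3)/2, used in the proof of Proposition 1, Appendix D.) -/
open Complex Filter Topology

/-- residue of the SOP Mellin–Barnes integrand at its dominant right pole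
s = (a+3)/2: lim_{s→(a+3)/2} (s − (a+3)/2)·χ'(s) = −Γ(a+a'+2)Γ(a+1)/(2Γ(a+2)). -/
theorem stmt12 (a a' : ℝ) (ha : -1 < a) (ha' : -1 < a') :
    Tendsto
      (fun s : ℂ => (s - ((a + 3) / 2 : ℝ)) *
        (Complex.Gamma (2 * s + (a' : ℂ) - 1) * Complex.Gamma ((a : ℂ) + 3 - 2 * s) *
          Complex.Gamma (2 * s - 2) / Complex.Gamma (2 * s - 1)))
      (𝓝[≠] (((a + 3) / 2 : ℝ) : ℂ))
      (𝓝 (-(Complex.Gamma ((a : ℂ) + (a' : ℂ) + 2) * Complex.Gamma ((a : ℂ) + 1) /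
            (2 * Complex.Gamma ((a : ℂ) + 2))))) := by
  set s₀ : ℂ := (((a + 3) / 2 : ℝ) : ℂ) with hs₀
  have h2s₀ : 2 * s₀ = (a : ℂ) + 3 := by
    rw [hs₀]; push_cast; ring
  -- pole factor
  have hmap : Tendsto (fun s : ℂ => (a : ℂ) + 3 - 2 * s) (𝓝[≠] s₀) (𝓝[≠] 0) := by
    rw [tendsto_nhdsWithin_iff]
    constructor
    · have : Tendsto (fun s : ℂ => (a : ℂ) + 3 - 2 * s) (𝓝 s₀) (𝓝 ((a : ℂ) + 3 - 2 * s₀)) :=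
        (continuous_const.sub (continuous_const.mul continuous_id)).tendsto s₀
      rw [h2s₀] at this
      simpa using this.mono_left nhdsWithin_le_nhds
    · filter_upwards [self_mem_nhdsWithin] with s hs
      simp only [Set.mem_compl_iff, Set.mem_singleton_iff] at hs ⊢
      intro h
      apply hs
      have : (2 : ℂ) * s = 2 * s₀ := by rw [h2s₀]; linear_combination -h
      field_simp at this; exact this
  have h1 : Tendsto (fun s : ℂ => ((a : ℂ) + 3 - 2 * s) * Complex.Gamma ((a : ℂ) + 3 - 2 * s))
      (𝓝[≠] s₀) (𝓝 1) := Complex.tendsto_self_mul_Gamma_nhds_zero.comp hmap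
  -- continuity of other Gamma factors
  have hcont : ∀ (c : ℂ) (w : ℂ), 0 < w.re → w = 2 * s₀ + c →
      Tendsto (fun s : ℂ => Complex.Gamma (2 * s + c)) (𝓝[≠] s₀) (𝓝 (Complex.Gamma w)) := by
    intro c w hw hwe
    have hne : ∀ m : ℕ, w ≠ -m := by
      intro m h
      rw [h] at hw
      simp at hw
      have : (0:ℝ) ≤ m := m.cast_nonneg
      linarith
    have := (Complex.differentiableAt_Gamma w hne).continuousAt
    have h2 : Tendsto (fun s : ℂ => 2 * s + c) (𝓝 s₀) (𝓝 w) := by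
      rw [hwe]
      exact ((continuous_const.mul continuous_id).add continuous_const).tendsto s₀
    exact (this.tendsto.comp h2).mono_left nhdsWithin_le_nhds
  have hA : Tendsto (fun s : ℂ => Complex.Gamma (2 * s + (a' : ℂ) - 1)) (𝓝[≠] s₀)
      (𝓝 (Complex.Gamma ((a : ℂ) + (a' : ℂ) + 2))) := by
    have := hcont ((a' : ℂ) - 1) ((a : ℂ) + (a' : ℂ) + 2) (by simp; linarith)
      (by rw [h2s₀]; ring)
    simpa [sub_eq_add_neg, add_assoc] using this
  have hC : Tendsto (fun s : ℂ => Complex.Gamma (2 * s - 2)) (𝓝[≠] s₀)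
      (𝓝 (Complex.Gamma ((a : ℂ) + 1))) := by
    have := hcont (-2) ((a : ℂ) + 1) (by simp; linarith) (by rw [h2s₀]; ring)
    simpa [sub_eq_add_neg] using this
  have hD : Tendsto (fun s : ℂ => Complex.Gamma (2 * s - 1)) (𝓝[≠] s₀)
      (𝓝 (Complex.Gamma ((a : ℂ) + 2))) := by
    have := hcont (-1) ((a : ℂ) + 2) (by simp; linarith) (by rw [h2s₀]; ring)
    simpa [sub_eq_add_neg] using this
  have hDne : Complex.Gamma ((a : ℂ) + 2) ≠ 0 := by
    apply Complex.Gamma_ne_zero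
    intro m h
    have : ((a : ℂ) + 2).re = (-(m : ℂ)).re := by rw [h]
    simp at this
    have : (0:ℝ) ≤ m := m.cast_nonneg
    linarith
  have key : Tendsto (fun s : ℂ =>
      (((a : ℂ) + 3 - 2 * s) * Complex.Gamma ((a : ℂ) + 3 - 2 * s)) * (-(1/2) : ℂ) *
        Complex.Gamma (2 * s + (a' : ℂ) - 1) * Complex.Gamma (2 * s - 2) /
        Complex.Gamma (2 * s - 1))
      (𝓝[≠] s₀)
      (𝓝 (1 * (-(1/2) : ℂ) * Complex.Gamma ((a : ℂ) + (a' : ℂ) + 2) *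
        Complex.Gamma ((a : ℂ) + 1) / Complex.Gamma ((a : ℂ) + 2))) :=
    (((h1.mul tendsto_const_nhds).mul hA).mul hC).div hD hDne
  have heq : (fun s : ℂ =>
      (((a : ℂ) + 3 - 2 * s) * Complex.Gamma ((a : ℂ) + 3 - 2 * s)) * (-(1/2) : ℂ) *
        Complex.Gamma (2 * s + (a' : ℂ) - 1) * Complex.Gamma (2 * s - 2) /
        Complex.Gamma (2 * s - 1)) =
      (fun s : ℂ => (s - s₀) *
        (Complex.Gamma (2 * s + (a' : ℂ) - 1) * Complex.Gamma ((a : ℂ) + 3 - 2 * s) *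
          Complex.Gamma (2 * s - 2) / Complex.Gamma (2 * s - 1))) := by
    funext s
    have : s - s₀ = ((a : ℂ) + 3 - 2 * s) * (-(1/2)) := by
      linear_combination (-(1/2) : ℂ) * h2s₀
    rw [this]; ring
  rw [heq] at key
  convert key using 2
  field_simp
end
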